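/- arXiv:2510.18584 — 4 statements merged into one kernel-verified Lean document; each statement's English description precedes it below -/
import Mathlib

section
/- Let G be a finite simple graph with weight function w, let H be a connected subgraph of G with at least one vertex, let T be a treedepth decomposition of G, and let h ∈ V(H) be the unique ≤_T-minimal element of V(H). Then there exists a chain C of ≤_T all of whose elements y satisfy h ≤_T y, with Σ_{y∈C} w(y) ≥ wtd(H); in other words, the weighted depth of the subtree of T rooted at h is at least the weighted treedepth of H. -/
/-- A treedepth decomposition of a simple graph `G`: a partial order `le` on the
vertices such that the set of elements below any vertex is linearly ordered, and
the endpoints of every edge are comparable. -/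
structure TDDecomp {V : Type*} (G : SimpleGraph V) where
  le : V → V → Prop
  le_refl : ∀ x, le x x
  le_antisymm : ∀ x y, le x y → le y x → x = y
  le_trans : ∀ x y z, le x y → le y z → le x z
  down_linear : ∀ x y z, le y x → le z x → le y z ∨ le z y
  adj_comparable : ∀ u v, G.Adj u v → le u v ∨ le v u

/-- A chain of a treedepth decomposition: a finite set of pairwise comparable vertices. -/
def TDDecomp.IsChain {V : Type*} {G : SimpleGraph V} (T : TDDecomp G) (C : Finset V) : Prop :=
  ∀ x ∈ C, ∀ y ∈ C, T.le x y ∨ T.le y x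

/-- The weighted depth of a treedepth decomposition: the maximum over all chains `C`
of the total weight of `C`. -/
noncomputable def TDDecomp.weightedDepth {V : Type*} {G : SimpleGraph V}
    (T : TDDecomp G) (w : V → ℕ) : ℕ :=
  sSup {s | ∃ C : Finset V, T.IsChain C ∧ s = C.sum w}

/-- The weighted treedepth of `G` with weight function `w`: the minimum weighted depth
over all treedepth decompositions of `G`. -/
noncomputable def wtd {V : Type*} (G : SimpleGraph V) (w : V → ℕ) : ℕ :=
  sInf {s | ∃ T : TDDecomp G, s = T.weightedDepth w}

/-- Let `H` be a connected subgraph of `G`, `T` a treedepth decomposition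
of `G`, and `h` the unique `≤_T`-minimal element of `V(H)`. Then there is a chain `C`
of `≤_T`, all of whose elements lie `≤_T`-above `h`, whose total weight is at least
the weighted treedepth of `H` (so the subtree of `T` rooted at `h` has weighted depth
at least `wtd H`). -/
theorem stmt1 {V : Type*} [Fintype V] (G : SimpleGraph V) (w : V → ℕ) (hw : ∀ v, 0 < w v)
    (H : G.Subgraph) (hH : H.Connected) (T : TDDecomp G)
    (h : V) (hmem : h ∈ H.verts) (hmin : ∀ y ∈ H.verts, T.le h y) :
    ∃ C : Finset V, T.IsChain C ∧ (∀ y ∈ C, T.le h y) ∧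
      wtd H.coe (fun x => w x) ≤ C.sum w := by
  classical
  -- Restrict T to H
  set T' : TDDecomp H.coe :=
    { le := fun x y => T.le x.val y.val
      le_refl := fun x => T.le_refl x.val
      le_antisymm := fun x y hxy hyx => Subtype.ext (T.le_antisymm _ _ hxy hyx)
      le_trans := fun x y z => T.le_trans _ _ _
      down_linear := fun x y z => T.down_linear _ _ _
      adj_comparable := fun u v huv => T.adj_comparable _ _ (H.adj_sub huv) } with hT'
  set S : Set ℕ := {s | ∃ C : Finset ↥H.verts, T'.IsChain C ∧ s = C.sum (fun x => w x.val)}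
    with hS
  have hne : S.Nonempty := ⟨0, ∅, by intro x hx; simp at hx, by simp⟩
  have hbdd : BddAbove S := by
    refine ⟨Finset.univ.sum w, fun s hs => ?_⟩
    obtain ⟨C, _, rfl⟩ := hs
    calc C.sum (fun x => w x.val) = (C.image Subtype.val).sum w := by
          rw [Finset.sum_image (by intro a _ b _ hab; exact Subtype.ext hab)]
      _ ≤ Finset.univ.sum w := Finset.sum_le_sum_of_subset (Finset.subset_univ _)
  have hmemS : sSup S ∈ S := Nat.sSup_mem hne hbdd
  obtain ⟨C', hC', hsum⟩ := hmemS
  refine ⟨C'.image Subtype.val, ?_, ?_, ?_⟩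
  · intro x hx y hy
    simp only [Finset.mem_image] at hx hy
    obtain ⟨a, ha, rfl⟩ := hx
    obtain ⟨b, hb, rfl⟩ := hy
    exact hC' a ha b hb
  · intro y hy
    simp only [Finset.mem_image] at hy
    obtain ⟨a, _, rfl⟩ := hy
    exact hmin a.val a.property
  · have h1 : wtd H.coe (fun x => w x) ≤ T'.weightedDepth (fun x => w x) :=
      Nat.sInf_le ⟨T', rfl⟩
    have h2 : T'.weightedDepth (fun x => w x) = sSup S := rfl
    rw [Finset.sum_image (by intro a _ b _ hab; exact Subtype.ext hab)]
    exact h1.trans (le_of_eq (h2.trans hsum))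
end

section
/- Let P be a path with vertices v_0, v_1, …, v_n (in this order) and weight function w : V(P) → ℕ, and for 0 ≤ i ≤ j ≤ n let P_{[i,j]} denote the subpath induced by {v_i, …, v_j}, with the convention wtd(P_{[i,j]}) = 0 when i > j. Then wtd(P) = min_{0 ≤ k ≤ n} ( w(v_k) + max( wtd(P_{[0,k-1]}), wtd(P_{[k+1,n]}) ) ). -/
/-- The path with vertices `v_0, …, v_n` (here `Fin (n+1)`), whose edges are exactly
`v_{i-1} v_i` for `1 ≤ i ≤ n`. -/
def pathG (n : ℕ) : SimpleGraph (Fin (n + 1)) :=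
  SimpleGraph.fromRel (fun i j => (i : ℕ) + 1 = (j : ℕ))

open scoped Classical

namespace TDDecomp

variable {V : Type*} {G : SimpleGraph V} (T : TDDecomp G) (w : V → ℕ)

lemma isChain_empty : T.IsChain ∅ := fun x hx => absurd hx (Finset.notMem_empty x)

lemma zero_mem_depthSet : (0:ℕ) ∈ {s | ∃ C : Finset V, T.IsChain C ∧ s = C.sum w} :=
  ⟨∅, T.isChain_empty, by simp⟩

lemma depthSet_bddAbove [Fintype V] :
    BddAbove {s | ∃ C : Finset V, T.IsChain C ∧ s = C.sum w} := by
  refine ⟨∑ v, w v, ?_⟩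
  rintro s ⟨C, -, rfl⟩
  exact Finset.sum_le_sum_of_subset (Finset.subset_univ C)

lemma sum_le_weightedDepth [Fintype V] {C : Finset V} (h : T.IsChain C) :
    C.sum w ≤ T.weightedDepth w :=
  le_csSup (T.depthSet_bddAbove w) ⟨C, h, rfl⟩

lemma weightedDepth_le {b : ℕ} (h : ∀ C : Finset V, T.IsChain C → C.sum w ≤ b) :
    T.weightedDepth w ≤ b :=
  csSup_le ⟨0, T.zero_mem_depthSet w⟩ (by rintro s ⟨C, hC, rfl⟩; exact h C hC)

lemma exists_chain [Fintype V] :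
    ∃ C : Finset V, T.IsChain C ∧ T.weightedDepth w = C.sum w :=
  Nat.sSup_mem ⟨0, T.zero_mem_depthSet w⟩ (T.depthSet_bddAbove w)

def ofLinearOrder {V : Type*} [LinearOrder V] (G : SimpleGraph V) : TDDecomp G where
  le x y := x ≤ y
  le_refl x := _root_.le_refl x
  le_antisymm _ _ := _root_.le_antisymm
  le_trans _ _ _ := _root_.le_trans
  down_linear _ y z _ _ := le_total y z
  adj_comparable u v _ := le_total u v

def restrict (T : TDDecomp G) (s : Set V) : TDDecomp (G.induce s) where
  le x y := T.le x y
  le_refl x := T.le_refl x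
  le_antisymm x y h1 h2 := Subtype.ext (T.le_antisymm _ _ h1 h2)
  le_trans x y z := T.le_trans _ _ _
  down_linear x y z := T.down_linear _ _ _
  adj_comparable u v h := T.adj_comparable _ _ h

lemma wtd_le_weightedDepth : wtd G w ≤ T.weightedDepth w := Nat.sInf_le ⟨T, rfl⟩

lemma exists_minimal [Fintype V] [Nonempty V] : ∃ m : V, ∀ z, T.le z m → z = m := by
  obtain ⟨m, -, hm⟩ := Finset.exists_min_image Finset.univ
    (fun x => (Finset.univ.filter (fun z => T.le z x)).card) Finset.univ_nonempty
  refine ⟨m, fun z hz => ?_⟩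
  by_contra hne
  have hsub : Finset.univ.filter (fun y => T.le y z) ⊂ Finset.univ.filter (fun y => T.le y m) := by
    constructor
    · intro y hy
      simp only [Finset.mem_filter, Finset.mem_univ, true_and] at hy ⊢
      exact T.le_trans _ _ _ hy hz
    · intro hrev
      have hmz : T.le m z := by
        have := hrev (Finset.mem_filter.mpr ⟨Finset.mem_univ m, T.le_refl m⟩)
        simpa using this
      exact hne (T.le_antisymm _ _ hz hmz)
  exact absurd (hm z (Finset.mem_univ z)) (not_le.2 (Finset.card_lt_card hsub))

end TDDecomp

lemma exists_wtd {V : Type*} [LinearOrder V] (G : SimpleGraph V) (w : V → ℕ) :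
    ∃ T : TDDecomp G, wtd G w = T.weightedDepth w := by
  have h : {s | ∃ T : TDDecomp G, s = T.weightedDepth w}.Nonempty :=
    ⟨(TDDecomp.ofLinearOrder G).weightedDepth w, TDDecomp.ofLinearOrder G, rfl⟩
  exact Nat.sInf_mem h

lemma pathG_adj {n : ℕ} {u v : Fin (n+1)} :
    (pathG n).Adj u v ↔ u ≠ v ∧ ((u:ℕ)+1 = (v:ℕ) ∨ (v:ℕ)+1 = (u:ℕ)) := by
  simp [pathG, SimpleGraph.fromRel_adj]

lemma min_le_all {n : ℕ} (T : TDDecomp (pathG n)) (m : Fin (n+1))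
    (hmin : ∀ z, T.le z m → z = m) : ∀ y, T.le m y := by
  have step : ∀ x y, T.le m x → (pathG n).Adj x y → T.le m y := by
    intro x y hx hadj
    rcases T.adj_comparable x y hadj with h | h
    · exact T.le_trans _ _ _ hx h
    · rcases T.down_linear x m y hx h with h2 | h2
      · exact h2
      · exact (hmin y h2) ▸ T.le_refl y
  have up : ∀ j : ℕ, (m:ℕ) ≤ j → ∀ hj : j < n+1, T.le m ⟨j, hj⟩ := by
    intro j
    induction j with
    | zero =>
      intro h hj
      have : m = ⟨0, hj⟩ := Fin.ext (Nat.le_zero.mp h)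
      exact this ▸ T.le_refl m
    | succ i ih =>
      intro h hj
      rcases Nat.lt_or_ge (m:ℕ) (i+1) with h' | h'
      · have hi : i < n+1 := Nat.lt_of_succ_lt hj
        refine step ⟨i, hi⟩ ⟨i+1, hj⟩ (ih (Nat.lt_succ_iff.mp h') hi) ?_
        exact pathG_adj.mpr ⟨by simp [Fin.ext_iff], Or.inl rfl⟩
      · have : m = ⟨i+1, hj⟩ := Fin.ext (le_antisymm h h')
        exact this ▸ T.le_refl m
  have down : ∀ d j : ℕ, j + d = (m:ℕ) → ∀ hj : j < n+1, T.le m ⟨j, hj⟩ := by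
    intro d
    induction d with
    | zero =>
      intro j h hj
      have : m = ⟨j, hj⟩ := Fin.ext (by simp only [Fin.val_mk]; omega)
      exact this ▸ T.le_refl m
    | succ e ih =>
      intro j h hj
      have hj1 : j+1 < n+1 := by have := m.isLt; omega
      refine step ⟨j+1, hj1⟩ ⟨j, hj⟩ (ih (j+1) (by omega) hj1) ?_
      exact pathG_adj.mpr ⟨by simp [Fin.ext_iff], Or.inr rfl⟩
  intro y
  rcases le_or_gt (m:ℕ) (y:ℕ) with h | h
  · have := up (y:ℕ) h y.isLt
    simpa using this
  · have := down ((m:ℕ) - (y:ℕ)) (y:ℕ) (by omega) y.isLt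
    simpa using this

lemma side_bound {V : Type*} [Fintype V] {G : SimpleGraph V} (T : TDDecomp G) (w : V → ℕ)
    (k : V) (hk : ∀ y, T.le k y) (s : Set V) (hks : k ∉ s) :
    w k + wtd (G.induce s) (fun x => w x) ≤ T.weightedDepth w := by
  obtain ⟨C, hC, hsum⟩ := (T.restrict s).exists_chain (fun x => w x)
  have h1 : wtd (G.induce s) (fun x => w x) ≤ (T.restrict s).weightedDepth (fun x => w x) :=
    (T.restrict s).wtd_le_weightedDepth _
  set D : Finset V := C.map (Function.Embedding.subtype _) with hD
  have hmemD : ∀ x : V, x ∈ D → x ∈ s := by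
    intro x hx
    rw [hD, Finset.mem_map] at hx
    obtain ⟨a, -, rfl⟩ := hx
    exact a.2
  have hkD : k ∉ D := fun h => hks (hmemD k h)
  have hchain : T.IsChain (insert k D) := by
    intro x hx y hy
    rcases Finset.mem_insert.mp hx with rfl | hx'
    · exact Or.inl (hk y)
    rcases Finset.mem_insert.mp hy with rfl | hy'
    · exact Or.inr (hk x)
    rw [hD, Finset.mem_map] at hx' hy'
    obtain ⟨a, ha, rfl⟩ := hx'
    obtain ⟨b, hb, rfl⟩ := hy'
    exact hC a ha b hb
  have hsum2 : (insert k D).sum w = w k + C.sum (fun x => w x) := by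
    rw [Finset.sum_insert hkD, hD, Finset.sum_map]
    rfl
  calc w k + wtd (G.induce s) (fun x => w x)
      ≤ w k + C.sum (fun x => w x) := by omega
    _ = (insert k D).sum w := hsum2.symm
    _ ≤ T.weightedDepth w := T.sum_le_weightedDepth w hchain

section Glue

variable {n : ℕ} (k : Fin (n + 1))

def Lset : Set (Fin (n + 1)) := {x : Fin (n + 1) | (x : ℕ) < (k : ℕ)}
def Rset : Set (Fin (n + 1)) := {x : Fin (n + 1) | (k : ℕ) < (x : ℕ)}

lemma mem_Lset {x : Fin (n+1)} : x ∈ Lset k ↔ (x:ℕ) < (k:ℕ) := Iff.rfl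
lemma mem_Rset {x : Fin (n+1)} : x ∈ Rset k ↔ (k:ℕ) < (x:ℕ) := Iff.rfl

lemma LR_absurd {x : Fin (n+1)} (h1 : x ∈ Lset k) (h2 : x ∈ Rset k) : False :=
  lt_asymm ((mem_Lset k).mp h1) ((mem_Rset k).mp h2)

lemma Lset_ne_k {x : Fin (n+1)} (h : x ∈ Lset k) : x ≠ k :=
  fun he => lt_irrefl _ ((mem_Lset k).mp (he ▸ h))

lemma Rset_ne_k {x : Fin (n+1)} (h : x ∈ Rset k) : x ≠ k :=
  fun he => lt_irrefl _ ((mem_Rset k).mp (he ▸ h))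

variable (TL : TDDecomp (SimpleGraph.induce (Lset k) (pathG n)))
variable (TR : TDDecomp (SimpleGraph.induce (Rset k) (pathG n)))

def glue : TDDecomp (pathG n) where
  le x y := x = k ∨ (∃ hx : x ∈ Lset k, ∃ hy : y ∈ Lset k, TL.le ⟨x, hx⟩ ⟨y, hy⟩) ∨
            (∃ hx : x ∈ Rset k, ∃ hy : y ∈ Rset k, TR.le ⟨x, hx⟩ ⟨y, hy⟩)
  le_refl x := by
    rcases lt_trichotomy (x:ℕ) (k:ℕ) with h | h | h
    · exact Or.inr (Or.inl ⟨h, h, TL.le_refl _⟩)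
    · exact Or.inl (Fin.ext h)
    · exact Or.inr (Or.inr ⟨h, h, TR.le_refl _⟩)
  le_antisymm x y hxy hyx := by
    rcases hxy with hxk | ⟨hx, hy, h⟩ | ⟨hx, hy, h⟩
    · rcases hyx with hyk | ⟨hy', hx', h'⟩ | ⟨hy', hx', h'⟩
      · exact hxk.trans hyk.symm
      · exact absurd hxk (Lset_ne_k k hx')
      · exact absurd hxk (Rset_ne_k k hx')
    · rcases hyx with hyk | ⟨hy', hx', h'⟩ | ⟨hy', hx', h'⟩
      · exact absurd hyk (Lset_ne_k k hy)
      · exact congrArg Subtype.val (TL.le_antisymm ⟨x, hx⟩ ⟨y, hy⟩ h h')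
      · exact absurd (LR_absurd k hy hy') id
    · rcases hyx with hyk | ⟨hy', hx', h'⟩ | ⟨hy', hx', h'⟩
      · exact absurd hyk (Rset_ne_k k hy)
      · exact absurd (LR_absurd k hy' hy) id
      · exact congrArg Subtype.val (TR.le_antisymm ⟨x, hx⟩ ⟨y, hy⟩ h h')
  le_trans x y z hxy hyz := by
    rcases hxy with hxk | ⟨hx, hy, h⟩ | ⟨hx, hy, h⟩
    · exact Or.inl hxk
    · rcases hyz with hyk | ⟨hy', hz, h'⟩ | ⟨hy', hz, h'⟩
      · exact absurd hyk (Lset_ne_k k hy)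
      · exact Or.inr (Or.inl ⟨hx, hz, TL.le_trans _ _ _ h h'⟩)
      · exact absurd (LR_absurd k hy hy') id
    · rcases hyz with hyk | ⟨hy', hz, h'⟩ | ⟨hy', hz, h'⟩
      · exact absurd hyk (Rset_ne_k k hy)
      · exact absurd (LR_absurd k hy' hy) id
      · exact Or.inr (Or.inr ⟨hx, hz, TR.le_trans _ _ _ h h'⟩)
  down_linear x y z hyx hzx := by
    rcases hyx with hyk | ⟨hy, hx, h⟩ | ⟨hy, hx, h⟩
    · exact Or.inl (Or.inl hyk)
    · rcases hzx with hzk | ⟨hz, hx', h'⟩ | ⟨hz, hx', h'⟩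
      · exact Or.inr (Or.inl hzk)
      · rcases TL.down_linear ⟨x, hx⟩ ⟨y, hy⟩ ⟨z, hz⟩ h h' with h2 | h2
        · exact Or.inl (Or.inr (Or.inl ⟨hy, hz, h2⟩))
        · exact Or.inr (Or.inr (Or.inl ⟨hz, hy, h2⟩))
      · exact absurd (LR_absurd k hx hx') id
    · rcases hzx with hzk | ⟨hz, hx', h'⟩ | ⟨hz, hx', h'⟩
      · exact Or.inr (Or.inl hzk)
      · exact absurd (LR_absurd k hx' hx) id
      · rcases TR.down_linear ⟨x, hx⟩ ⟨y, hy⟩ ⟨z, hz⟩ h h' with h2 | h2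
        · exact Or.inl (Or.inr (Or.inr ⟨hy, hz, h2⟩))
        · exact Or.inr (Or.inr (Or.inr ⟨hz, hy, h2⟩))
  adj_comparable u v hadj := by
    obtain ⟨hne, hrel⟩ := pathG_adj.mp hadj
    by_cases hu : u = k
    · exact Or.inl (Or.inl hu)
    by_cases hv : v = k
    · exact Or.inr (Or.inl hv)
    have hu' : (u:ℕ) ≠ (k:ℕ) := fun h => hu (Fin.ext h)
    have hv' : (v:ℕ) ≠ (k:ℕ) := fun h => hv (Fin.ext h)
    have hcase : ((u:ℕ) < (k:ℕ) ∧ (v:ℕ) < (k:ℕ)) ∨ ((k:ℕ) < (u:ℕ) ∧ (k:ℕ) < (v:ℕ)) := by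
      omega
    rcases hcase with ⟨h1, h2⟩ | ⟨h1, h2⟩
    · have hadj' : (SimpleGraph.induce (Lset k) (pathG n)).Adj ⟨u, h1⟩ ⟨v, h2⟩ := hadj
      rcases TL.adj_comparable _ _ hadj' with h | h
      · exact Or.inl (Or.inr (Or.inl ⟨h1, h2, h⟩))
      · exact Or.inr (Or.inr (Or.inl ⟨h2, h1, h⟩))
    · have hadj' : (SimpleGraph.induce (Rset k) (pathG n)).Adj ⟨u, h1⟩ ⟨v, h2⟩ := hadj
      rcases TR.adj_comparable _ _ hadj' with h | h
      · exact Or.inl (Or.inr (Or.inr ⟨h1, h2, h⟩))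
      · exact Or.inr (Or.inr (Or.inr ⟨h2, h1, h⟩))

end Glue

section GlueDepth

variable {n : ℕ} (k : Fin (n + 1)) (w : Fin (n + 1) → ℕ)
variable (TL : TDDecomp (SimpleGraph.induce (Lset k) (pathG n)))
variable (TR : TDDecomp (SimpleGraph.induce (Rset k) (pathG n)))

lemma glue_chain_side_L (C : Finset (Fin (n + 1))) (hC : (glue k TL TR).IsChain C)
    (hside : ∀ x ∈ C, x ∉ Rset k) :
    C.sum w ≤ w k + TL.weightedDepth (fun x => w x) := by
  classical
  set F := C.filter (fun x => x ∈ Lset k) with hF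
  have hsub : C ⊆ insert k F := by
    intro x hx
    rcases lt_trichotomy (x:ℕ) (k:ℕ) with h | h | h
    · exact Finset.mem_insert_of_mem (Finset.mem_filter.mpr ⟨hx, h⟩)
    · exact Finset.mem_insert.mpr (Or.inl (Fin.ext h))
    · exact absurd h (hside x hx)
  have hkF : k ∉ F := by
    intro h
    exact absurd rfl (Lset_ne_k k (Finset.mem_filter.mp h).2)
  have h1 : C.sum w ≤ (insert k F).sum w := Finset.sum_le_sum_of_subset hsub
  rw [Finset.sum_insert hkF] at h1
  set D : Finset (Lset k) := F.subtype (fun x => x ∈ Lset k) with hD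
  have hsumD : D.sum (fun x => w x) = F.sum w :=
    Finset.sum_subtype_of_mem _ (fun x hx => (Finset.mem_filter.mp hx).2)
  have hchainD : TL.IsChain D := by
    intro x hx y hy
    rw [hD, Finset.mem_subtype] at hx hy
    have hxC : (x:Fin (n+1)) ∈ C := (Finset.mem_filter.mp hx).1
    have hyC : (y:Fin (n+1)) ∈ C := (Finset.mem_filter.mp hy).1
    rcases hC x hxC y hyC with h | h
    · rcases h with hxk | ⟨hx', hy', h'⟩ | ⟨hx', hy', h'⟩
      · exact absurd hxk (Lset_ne_k k x.2)
      · exact Or.inl h'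
      · exact absurd (LR_absurd k x.2 hx') id
    · rcases h with hyk | ⟨hy', hx', h'⟩ | ⟨hy', hx', h'⟩
      · exact absurd hyk (Lset_ne_k k y.2)
      · exact Or.inr h'
      · exact absurd (LR_absurd k y.2 hy') id
  have h2 : D.sum (fun x => w x) ≤ TL.weightedDepth (fun x => w x) :=
    TL.sum_le_weightedDepth _ hchainD
  have h3 : F.sum w ≤ TL.weightedDepth (fun x => w x) := hsumD ▸ h2
  calc C.sum w ≤ w k + F.sum w := h1
    _ ≤ w k + TL.weightedDepth (fun x => w x) := by omega

lemma glue_chain_side_R (C : Finset (Fin (n + 1))) (hC : (glue k TL TR).IsChain C)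
    (hside : ∀ x ∈ C, x ∉ Lset k) :
    C.sum w ≤ w k + TR.weightedDepth (fun x => w x) := by
  classical
  set F := C.filter (fun x => x ∈ Rset k) with hF
  have hsub : C ⊆ insert k F := by
    intro x hx
    rcases lt_trichotomy (x:ℕ) (k:ℕ) with h | h | h
    · exact absurd h (hside x hx)
    · exact Finset.mem_insert.mpr (Or.inl (Fin.ext h))
    · exact Finset.mem_insert_of_mem (Finset.mem_filter.mpr ⟨hx, h⟩)
  have hkF : k ∉ F := by
    intro h
    exact absurd rfl (Rset_ne_k k (Finset.mem_filter.mp h).2)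
  have h1 : C.sum w ≤ (insert k F).sum w := Finset.sum_le_sum_of_subset hsub
  rw [Finset.sum_insert hkF] at h1
  set D : Finset (Rset k) := F.subtype (fun x => x ∈ Rset k) with hD
  have hsumD : D.sum (fun x => w x) = F.sum w :=
    Finset.sum_subtype_of_mem _ (fun x hx => (Finset.mem_filter.mp hx).2)
  have hchainD : TR.IsChain D := by
    intro x hx y hy
    rw [hD, Finset.mem_subtype] at hx hy
    have hxC : (x:Fin (n+1)) ∈ C := (Finset.mem_filter.mp hx).1
    have hyC : (y:Fin (n+1)) ∈ C := (Finset.mem_filter.mp hy).1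
    rcases hC x hxC y hyC with h | h
    · rcases h with hxk | ⟨hx', hy', h'⟩ | ⟨hx', hy', h'⟩
      · exact absurd hxk (Rset_ne_k k x.2)
      · exact absurd (LR_absurd k hx' x.2) id
      · exact Or.inl h'
    · rcases h with hyk | ⟨hy', hx', h'⟩ | ⟨hy', hx', h'⟩
      · exact absurd hyk (Rset_ne_k k y.2)
      · exact absurd (LR_absurd k hy' y.2) id
      · exact Or.inr h'
  have h2 : D.sum (fun x => w x) ≤ TR.weightedDepth (fun x => w x) :=
    TR.sum_le_weightedDepth _ hchainD
  have h3 : F.sum w ≤ TR.weightedDepth (fun x => w x) := hsumD ▸ h2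
  calc C.sum w ≤ w k + F.sum w := h1
    _ ≤ w k + TR.weightedDepth (fun x => w x) := by omega

lemma glue_depth_le :
    (glue k TL TR).weightedDepth w ≤
      w k + max (TL.weightedDepth (fun x => w x)) (TR.weightedDepth (fun x => w x)) := by
  apply TDDecomp.weightedDepth_le
  intro C hC
  by_cases h : ∃ x ∈ C, x ∈ Rset k
  · obtain ⟨r, hrC, hrR⟩ := h
    have hside : ∀ x ∈ C, x ∉ Lset k := by
      intro x hx hxL
      rcases hC x hx r hrC with h' | h'
      · rcases h' with hxk | ⟨h1, h2, -⟩ | ⟨h1, h2, -⟩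
        · exact Lset_ne_k k hxL hxk
        · exact LR_absurd k h2 hrR
        · exact LR_absurd k hxL h1
      · rcases h' with hrk | ⟨h1, h2, -⟩ | ⟨h1, h2, -⟩
        · exact Rset_ne_k k hrR hrk
        · exact LR_absurd k h1 hrR
        · exact LR_absurd k hxL h2
    have := glue_chain_side_R k w TL TR C hC hside
    omega
  · push_neg at h
    have := glue_chain_side_L k w TL TR C hC h
    omega

end GlueDepth

/-- For a weighted path `P = (v_0, …, v_n)`,
`wtd P = min_k ( w v_k + max (wtd P_{[0,k-1]}) (wtd P_{[k+1,n]}) )`, where the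
subpaths are the induced subgraphs on `{v_0,…,v_{k-1}}` and `{v_{k+1},…,v_n}`
(of weighted treedepth `0` when empty). -/
theorem stmt5 (n : ℕ) (w : Fin (n + 1) → ℕ) (hw : ∀ v, 0 < w v) :
    wtd (pathG n) w =
      Finset.univ.inf' Finset.univ_nonempty (fun k : Fin (n + 1) =>
        w k + max
          (wtd (SimpleGraph.induce {x : Fin (n + 1) | (x : ℕ) < (k : ℕ)} (pathG n))
            (fun x => w x))
          (wtd (SimpleGraph.induce {x : Fin (n + 1) | (k : ℕ) < (x : ℕ)} (pathG n))
            (fun x => w x))) := by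
  apply le_antisymm
  · apply Finset.le_inf'
    intro k _
    obtain ⟨TL, hTL⟩ := exists_wtd (SimpleGraph.induce (Lset k) (pathG n)) (fun x => w x)
    obtain ⟨TR, hTR⟩ := exists_wtd (SimpleGraph.induce (Rset k) (pathG n)) (fun x => w x)
    show wtd (pathG n) w ≤ w k + max
      (wtd (SimpleGraph.induce (Lset k) (pathG n)) (fun x => w x))
      (wtd (SimpleGraph.induce (Rset k) (pathG n)) (fun x => w x))
    rw [hTL, hTR]
    calc wtd (pathG n) w ≤ (glue k TL TR).weightedDepth w :=
          (glue k TL TR).wtd_le_weightedDepth w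
      _ ≤ w k + max (TL.weightedDepth (fun x => w x)) (TR.weightedDepth (fun x => w x)) :=
          glue_depth_le k w TL TR
  · obtain ⟨T, hT⟩ := exists_wtd (pathG n) w
    obtain ⟨m, hm⟩ := T.exists_minimal
    have hall := min_le_all T m hm
    have hL : w m + wtd (SimpleGraph.induce (Lset m) (pathG n)) (fun x => w x)
        ≤ T.weightedDepth w :=
      side_bound T w m hall (Lset m) (lt_irrefl (m:ℕ))
    have hR : w m + wtd (SimpleGraph.induce (Rset m) (pathG n)) (fun x => w x)
        ≤ T.weightedDepth w :=
      side_bound T w m hall (Rset m) (lt_irrefl (m:ℕ))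
    rw [hT]
    refine le_trans (Finset.inf'_le _ (Finset.mem_univ m)) ?_
    show w m + max
      (wtd (SimpleGraph.induce (Lset m) (pathG n)) (fun x => w x))
      (wtd (SimpleGraph.induce (Rset m) (pathG n)) (fun x => w x)) ≤ T.weightedDepth w
    rcases max_choice (wtd (SimpleGraph.induce (Lset m) (pathG n)) (fun x => w x))
      (wtd (SimpleGraph.induce (Rset m) (pathG n)) (fun x => w x)) with h | h <;> rw [h]
    · exact hL
    · exact hR
end

section
/- Let G be a 1-subdivided star with center a, middle vertices b_1, …, b_n and leaves c_1, …, c_n, with weight function w satisfying w(c_1) ≥ w(c_2) ≥ … ≥ w(c_n), and w(b_i) ≤ w(b_j) whenever i ≤ j and w(c_i) = w(c_j). Then there exists a treedepth decomposition T of G of minimum weighted depth such that every c_k is a ≤_T-maximal element and the index set I = { i ≤ n : b_i <_T a } is an initial segment of {1, …, n}, i.e., for all i < j ≤ n, if j ∈ I then i ∈ I. -/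
/-- Vertices of a 1-subdivided star with `n` branches: the center `a`, the middle
vertices `b_1, …, b_n` and the leaves `c_1, …, c_n`. -/
inductive StarV (n : ℕ) where
  | center : StarV n
  | mid : Fin n → StarV n
  | leaf : Fin n → StarV n

/-- The 1-subdivided star: edges are exactly `a b_i` and `b_i c_i` for `1 ≤ i ≤ n`. -/
def subdivStar (n : ℕ) : SimpleGraph (StarV n) :=
  SimpleGraph.fromRel (fun x y =>
    (∃ i, x = StarV.center ∧ y = StarV.mid i) ∨
    (∃ i, x = StarV.mid i ∧ y = StarV.leaf i))

/-!
For `k ≤ n` let `T_k` be the decomposition with root path `b_1 < ⋯ < b_k < a`, every other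
`b_j` hanging below `a` and every `c_j` hanging below `b_j`; it has the required shape, and its
weighted depth is the largest weight of a root-to-`a` or root-to-`c_j` path.

Given any decomposition `T`, let `k` be maximal with `b_1, …, b_k <_T a`. Each path of `T_k`
is outweighed by a chain of `T`. For `j ≤ k`, the `b_i <_T a` with `i ≤ j` form a chain whose
top `b_m` has `m ≤ j`, and adding `c_m` gives weight at least that of `b_1, …, b_j, c_j`, since
the leaf weights decrease. For `j > k`, the path `b_1, …, b_k, a, b_j, c_j` is outweighed either
by the chain `b_1, …, b_k, a, b_j, c_j` of `T` itself (if `a <_T b_j`), or by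
`b_1, …, b_k, b_j, a, b_{k+1}, c_{k+1}` (if `b_j <_T a`). So the best `T_k` is optimal.
-/

open Finset

lemma List.sum_toFinset_le_sum_map {α M : Type*} [DecidableEq α] [AddCommMonoid M]
    [PartialOrder M] [CanonicallyOrderedAdd M] (l : List α) (f : α → M) :
    ∑ x ∈ l.toFinset, f x ≤ (l.map f).sum := by
  rw [Finset.sum_list_map_count]
  exact sum_le_sum fun x hx =>
    le_self_nsmul zero_le (List.count_pos_iff.2 (List.mem_toFinset.1 hx)).ne'

lemma List.mem_take_finRange {n m : ℕ} {l : Fin n} :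
    l ∈ (List.finRange n).take m ↔ l.1 < m := by
  rw [List.mem_take_iff_getElem]
  constructor
  · rintro ⟨i, hi, rfl⟩
    simp only [List.getElem_finRange, Fin.cast_mk]
    omega
  · intro hl
    exact ⟨l.1, by simp [hl], by simp⟩

lemma Fin.exists_longest_initial_segment {n : ℕ} (P : Fin n → Prop) :
    ∃ k : ℕ, (∀ l : Fin n, l.1 < k → P l) ∧ ∀ l : Fin n, l.1 = k → ¬ P l := by
  classical
  have hex : ∃ k : ℕ, ∀ l : Fin n, l.1 = k → ¬ P l := ⟨n, fun l hl => absurd hl l.2.ne⟩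
  refine ⟨Nat.find hex, fun l hl => ?_, Nat.find_spec hex⟩
  obtain ⟨l', hl', hP⟩ : ∃ l' : Fin n, l'.1 = l.1 ∧ P l' := by
    simpa using Nat.find_min hex hl
  rwa [← Fin.ext hl']

namespace TDDecomp

variable {V : Type*} {G : SimpleGraph V}

def ofPaths {α : Type*} (p : V → List α) (hp : p.Injective)
    (hadj : ∀ u v, G.Adj u v → p u <+: p v ∨ p v <+: p u) : TDDecomp G where
  le x y := p x <+: p y
  le_refl _ := List.prefix_refl _
  le_antisymm _ _ hxy hyx := hp (hxy.eq_of_length_le hyx.length_le)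
  le_trans _ _ _ := List.IsPrefix.trans
  down_linear _ _ _ := List.prefix_or_prefix_of_prefix
  adj_comparable := hadj

lemma mem_of_ofPaths_le {p : V → List V} {hp : p.Injective}
    {hadj : ∀ u v, G.Adj u v → p u <+: p v ∨ p v <+: p u} (hmem : ∀ v, v ∈ p v) {x y : V}
    (h : (ofPaths p hp hadj).le x y) : x ∈ p y :=
  h.subset (hmem x)

lemma IsChain.exists_forall_le {T : TDDecomp G} {C : Finset V} (hC : T.IsChain C)
    (hne : C.Nonempty) : ∃ m ∈ C, ∀ c ∈ C, T.le c m := by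
  let _ : LE V := ⟨T.le⟩
  have : IsTrans V (· ≤ ·) := ⟨T.le_trans⟩
  obtain ⟨m, hmC, hmax⟩ := exists_maximal hne
  exact ⟨m, hmC, fun c hc => (hC c hc m hmC).elim id fun hmc => hmax hc hmc⟩

variable (T : TDDecomp G)

lemma isChain_of_forall_le {C : Finset V} {x : V} (h : ∀ c ∈ C, T.le c x) : T.IsChain C :=
  fun c hc d hd => T.down_linear x c d (h c hc) (h d hd)

lemma isChain_insert_of_forall_le [DecidableEq V] {C : Finset V} {x y : V}
    (h : ∀ c ∈ C, T.le c x) (hxy : T.le x y ∨ T.le y x) : T.IsChain (insert y C) := by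
  have hy : ∀ c ∈ C, T.le c y ∨ T.le y c := fun c hc =>
    hxy.elim (fun hxy => Or.inl (T.le_trans _ _ _ (h c hc) hxy)) (T.down_linear x c y (h c hc))
  intro c hc d hd
  rcases mem_insert.1 hc with rfl | hcC
  · rcases mem_insert.1 hd with rfl | hdC
    · exact .inl (T.le_refl _)
    · exact (hy d hdC).symm
  · rcases mem_insert.1 hd with rfl | hdC
    · exact hy c hcC
    · exact T.isChain_of_forall_le h c hcC d hdC

lemma sum_le_weightedDepth_s8 [Finite V] (w : V → ℕ) {C : Finset V} (hC : T.IsChain C) :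
    ∑ c ∈ C, w c ≤ T.weightedDepth w := by
  have := Fintype.ofFinite V
  refine le_csSup ⟨∑ v, w v, ?_⟩ ⟨C, hC, rfl⟩
  rintro s ⟨C', -, rfl⟩
  exact sum_le_sum_of_subset (subset_univ C')

lemma weightedDepth_ofPaths_le {p : V → List V} {hp : p.Injective}
    {hadj : ∀ u v, G.Adj u v → p u <+: p v ∨ p v <+: p u} (hmem : ∀ v, v ∈ p v) (w : V → ℕ)
    {D : ℕ} (hD : ∀ v, ((p v).map w).sum ≤ D) : (ofPaths p hp hadj).weightedDepth w ≤ D := by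
  classical
  refine csSup_le ⟨0, ∅, fun _ h => absurd h (notMem_empty _), rfl⟩ ?_
  rintro s ⟨C, hC, rfl⟩
  rcases C.eq_empty_or_nonempty with rfl | hne
  · simp
  obtain ⟨v, -, hv⟩ := hC.exists_forall_le hne
  calc ∑ c ∈ C, w c ≤ ∑ c ∈ (p v).toFinset, w c :=
        sum_le_sum_of_subset fun c hc => List.mem_toFinset.2 (mem_of_ofPaths_le hmem (hv c hc))
    _ ≤ ((p v).map w).sum := List.sum_toFinset_le_sum_map _ _
    _ ≤ D := hD v

end TDDecomp

namespace StarV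

variable {n : ℕ}

instance : Finite (StarV n) :=
  Finite.of_surjective (Sum.elim (fun _ : Unit => center) (Sum.elim mid leaf)) <| by
    rintro (_ | i | i)
    exacts [⟨.inl (), rfl⟩, ⟨.inr (.inl i), rfl⟩, ⟨.inr (.inr i), rfl⟩]

def midEmb : Fin n ↪ StarV n := ⟨mid, fun _ _ => mid.inj⟩

@[simp] lemma midEmb_apply (i : Fin n) : midEmb i = mid i := rfl

lemma adj_center_mid (i : Fin n) : (subdivStar n).Adj center (mid i) := by
  simp [subdivStar]

lemma adj_mid_leaf (i : Fin n) : (subdivStar n).Adj (mid i) (leaf i) := by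
  simp [subdivStar]

def spine (m : ℕ) : List (StarV n) := ((List.finRange n).take m).map mid

lemma mem_spine {m : ℕ} {x : StarV n} : x ∈ spine m ↔ ∃ l : Fin n, l.1 < m ∧ mid l = x := by
  simp only [spine, List.mem_map, List.mem_take_finRange]

lemma spine_prefix {m m' : ℕ} (h : m ≤ m') : spine (n := n) m <+: spine m' :=
  (List.take_prefix_take_left h).map _

lemma spine_succ {m : ℕ} (h : m < n) : spine (m + 1) = spine m ++ [mid ⟨m, h⟩] := by
  simp [spine, List.take_add_one, h]

lemma sum_map_spine (w : StarV n → ℕ) (m : ℕ) :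
    ((spine m).map w).sum = ∑ l with l.1 < m, w (mid l) := by
  classical
  have hnodup : (spine (n := n) m).Nodup :=
    ((List.nodup_finRange n).sublist (List.take_sublist _ _)).map fun _ _ => mid.inj
  rw [← List.sum_toFinset w hnodup]
  calc ∑ x ∈ (spine m).toFinset, w x = ∑ l with l.1 < m, w (midEmb l) := by
        rw [← sum_map]
        congr 1
        ext x
        simp [mem_spine]
    _ = ∑ l with l.1 < m, w (mid l) := rfl

def midPath (k : ℕ) (i : Fin n) : List (StarV n) :=
  if i.1 < k then spine (i.1 + 1) else spine k ++ [center, mid i]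

def path (k : ℕ) : StarV n → List (StarV n)
  | center => spine k ++ [center]
  | mid i => midPath k i
  | leaf i => midPath k i ++ [leaf i]

lemma getLast?_path (k : ℕ) (v : StarV n) : (path k v).getLast? = some v := by
  cases v with
  | center => simp [path]
  | mid i => by_cases hi : i.1 < k <;> simp [path, midPath, hi, spine_succ i.2]
  | leaf i => simp [path]

lemma path_injective (k : ℕ) : (path (n := n) k).Injective := fun x y h =>
  Option.some_inj.1 ((getLast?_path k x).symm.trans (h ▸ getLast?_path k y))

lemma mem_path_self (k : ℕ) (v : StarV n) : v ∈ path k v :=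
  List.mem_of_getLast? (getLast?_path k v)

lemma midPath_prefix_path_center {k : ℕ} {i : Fin n} (hi : i.1 < k) :
    midPath k i <+: path k center := by
  simp only [midPath, hi, if_true, path]
  exact (spine_prefix hi).trans (List.prefix_append _ _)

lemma path_prefix_of_adj (k : ℕ) {u v : StarV n} (h : (subdivStar n).Adj u v) :
    path k u <+: path k v ∨ path k v <+: path k u := by
  have center_mid (i : Fin n) : path k center <+: midPath k i ∨ midPath k i <+: path k center := by
    by_cases hi : i.1 < k
    · exact .inr (midPath_prefix_path_center hi)
    · exact .inl ⟨[mid i], by simp [path, midPath, hi]⟩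
  simp only [subdivStar, SimpleGraph.fromRel_adj] at h
  rcases h with ⟨-, (⟨i, rfl, rfl⟩ | ⟨i, rfl, rfl⟩) | (⟨i, rfl, rfl⟩ | ⟨i, rfl, rfl⟩)⟩
  · exact center_mid i
  · exact .inl (List.prefix_append _ _)
  · exact (center_mid i).symm
  · exact .inr (List.prefix_append _ _)

def decomp (n k : ℕ) : TDDecomp (subdivStar n) :=
  .ofPaths (path k) (path_injective k) fun _ _ => path_prefix_of_adj k

lemma eq_of_decomp_leaf_le {k : ℕ} {l : Fin n} {x : StarV n} (h : (decomp n k).le (leaf l) x) :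
    x = leaf l := by
  have hl := TDDecomp.mem_of_ofPaths_le (mem_path_self k) h
  cases x with
  | center => simp [path, mem_spine] at hl
  | mid i => by_cases hi : i.1 < k <;> simp [path, midPath, hi, mem_spine] at hl
  | leaf i => by_cases hi : i.1 < k <;> simp_all [path, midPath, mem_spine]

lemma decomp_mid_le_center_iff {k : ℕ} {j : Fin n} :
    (decomp n k).le (mid j) center ↔ j.1 < k := by
  refine ⟨fun h => ?_, midPath_prefix_path_center⟩
  simpa [path, mem_spine] using TDDecomp.mem_of_ofPaths_le (mem_path_self k) h

lemma weightedDepth_decomp_le {k D : ℕ} (w : StarV n → ℕ)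
    (hcenter : ∑ l with l.1 < k, w (mid l) + w center ≤ D)
    (hlow : ∀ i : Fin n, i.1 < k → ∑ l with l.1 < i.1 + 1, w (mid l) + w (leaf i) ≤ D)
    (hhigh : ∀ i : Fin n, k ≤ i.1 →
      ∑ l with l.1 < k, w (mid l) + w center + w (mid i) + w (leaf i) ≤ D) :
    (decomp n k).weightedDepth w ≤ D := by
  have hleaf (i : Fin n) : ((path k (leaf i)).map w).sum ≤ D := by
    by_cases hi : i.1 < k
    · simpa [path, midPath, hi, sum_map_spine] using hlow i hi
    · simpa [path, midPath, hi, sum_map_spine, add_assoc] using hhigh i (not_lt.1 hi)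
  refine TDDecomp.weightedDepth_ofPaths_le (mem_path_self k) w fun v => ?_
  cases v with
  | center => simpa [path, sum_map_spine] using hcenter
  | mid i => exact le_trans (by simp [path]) (hleaf i)
  | leaf i => exact hleaf i

section LowerBounds

variable (T : TDDecomp (subdivStar n)) (w : StarV n → ℕ) {s : Finset (Fin n)}

lemma sum_mid_add_center_le (hs : ∀ l ∈ s, T.le (mid l) center) :
    ∑ l ∈ s, w (mid l) + w center ≤ T.weightedDepth w := by
  classical
  have hC : ∀ c ∈ s.map midEmb, T.le c center := by simpa using hs
  have := T.sum_le_weightedDepth_s8 w (T.isChain_insert_of_forall_le hC (.inl (T.le_refl center)))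
  rw [sum_insert (by simp), sum_map] at this
  simpa [add_comm] using this

lemma sum_mid_add_center_add_branch_le (hs : ∀ l ∈ s, T.le (mid l) center) {j : Fin n}
    (hj : T.le center (mid j)) :
    ∑ l ∈ s, w (mid l) + w center + w (mid j) + w (leaf j) ≤ T.weightedDepth w := by
  classical
  have hjs : j ∉ s := fun h => by cases T.le_antisymm _ _ (hs j h) hj
  have hC : ∀ c ∈ insert (mid j) (insert center (s.map midEmb)), T.le c (mid j) := by
    simpa using ⟨T.le_refl _, hj, fun l hl => T.le_trans _ _ _ (hs l hl) hj⟩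
  have := T.sum_le_weightedDepth_s8 w
    (T.isChain_insert_of_forall_le hC (T.adj_comparable _ _ (adj_mid_leaf j)))
  rw [sum_insert (by simp), sum_insert (by simpa using hjs), sum_insert (by simp), sum_map] at this
  simp only [midEmb_apply] at this
  omega

lemma sum_mid_add_leaf_le (hc : Antitone fun i => w (leaf i))
    (hs : ∀ l ∈ s, T.le (mid l) center) {i : Fin n} (hi : i ∈ s) (hsi : ∀ l ∈ s, l ≤ i) :
    ∑ l ∈ s, w (mid l) + w (leaf i) ≤ T.weightedDepth w := by
  classical
  obtain ⟨_, hm, htop⟩ := (T.isChain_of_forall_le (C := s.map midEmb) (by simpa using hs)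
    ).exists_forall_le ⟨mid i, by simpa using hi⟩
  obtain ⟨m, hms, rfl⟩ := mem_map.1 hm
  have := T.sum_le_weightedDepth_s8 w
    (T.isChain_insert_of_forall_le htop (T.adj_comparable _ _ (adj_mid_leaf m)))
  rw [sum_insert (by simp), sum_map] at this
  have := hc (hsi m hms)
  simp only [midEmb_apply] at *
  omega

end LowerBounds

theorem exists_weightedDepth_decomp_le (w : StarV n → ℕ) (hc : Antitone fun i => w (leaf i))
    (T : TDDecomp (subdivStar n)) : ∃ k, (decomp n k).weightedDepth w ≤ T.weightedDepth w := by
  obtain ⟨k, hbelow, hcut⟩ := Fin.exists_longest_initial_segment fun l => T.le (mid l) center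
  have center_le (l : Fin n) (h : ¬ T.le (mid l) center) : T.le center (mid l) :=
    (T.adj_comparable _ _ (adj_center_mid l)).resolve_right h
  have hs : ∀ l ∈ ({l | l.1 < k} : Finset (Fin n)), T.le (mid l) center := fun l hl =>
    hbelow l (mem_filter.1 hl).2
  refine ⟨k, weightedDepth_decomp_le w (sum_mid_add_center_le T w hs) (fun i hi => ?_)
    fun i hi => ?_⟩
  · refine sum_mid_add_leaf_le T w hc (fun l hl => hbelow l ?_) (by simp) fun l hl => ?_
    all_goals simp only [mem_filter, mem_univ, true_and] at hl
    · omega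
    · exact Fin.le_def.2 (by omega)
  by_cases hic : T.le (mid i) center
  · -- `a <_T b_k` and `w c_i ≤ w c_k`: the chain `b_{<k}, b_i, a, b_k, c_k` of `T` wins
    have hki : k < i.1 := lt_of_le_of_ne hi fun h => hcut i h.symm hic
    set k' : Fin n := ⟨k, hki.trans i.2⟩
    have hk'i : k' ≤ i := Fin.le_def.2 hki.le
    have h := sum_mid_add_center_add_branch_le T w (s := insert i ({l | l.1 < k} : Finset (Fin n)))
      (forall_mem_insert _ _ _ |>.2 ⟨hic, hs⟩) (center_le k' (hcut k' rfl))
    rw [sum_insert (by simp; omega)] at h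
    have := hc hk'i
    simp only at this
    omega
  · exact sum_mid_add_center_add_branch_le T w hs (center_le i hic)

end StarV

theorem stmt8_general (n : ℕ) (w : StarV n → ℕ)
    (hc : ∀ i j : Fin n, i ≤ j → w (StarV.leaf j) ≤ w (StarV.leaf i)) :
    ∃ T : TDDecomp (subdivStar n),
      T.weightedDepth w = wtd (subdivStar n) w ∧
      (∀ k : Fin n, ∀ x, T.le (StarV.leaf k) x → x = StarV.leaf k) ∧
      (∀ i j : Fin n, i < j →
        (T.le (StarV.mid j) StarV.center ∧ StarV.mid j ≠ StarV.center) →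
        (T.le (StarV.mid i) StarV.center ∧ StarV.mid i ≠ StarV.center)) := by
  obtain ⟨T₀, hT₀⟩ : wtd (subdivStar n) w ∈ _ := Nat.sInf_mem ⟨_, StarV.decomp n 0, rfl⟩
  obtain ⟨k, hk⟩ := StarV.exists_weightedDepth_decomp_le w hc T₀
  refine ⟨StarV.decomp n k, le_antisymm (hT₀ ▸ hk) (Nat.sInf_le ⟨_, rfl⟩),
    fun _ _ => StarV.eq_of_decomp_leaf_le, fun i j hij ⟨hj, _⟩ => ⟨?_, nofun⟩⟩
  rw [StarV.decomp_mid_le_center_iff] at hj ⊢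
  exact (Fin.lt_def.1 hij).trans hj

/-- Suppose the leaves are ordered by decreasing weight and, among equal
leaf weights, the middle vertices by increasing weight. Then there is an optimal
treedepth decomposition `T` in which every `c_k` is `≤_T`-maximal and the index set
`I = { i : b_i <_T a }` is an initial segment: for all `i < j`, if `b_j <_T a` then
`b_i <_T a`. -/
theorem stmt8 (n : ℕ) (w : StarV n → ℕ) (hw : ∀ v, 0 < w v)
    (hc : ∀ i j : Fin n, i ≤ j → w (StarV.leaf j) ≤ w (StarV.leaf i))
    (hb : ∀ i j : Fin n, i ≤ j → w (StarV.leaf i) = w (StarV.leaf j) →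
      w (StarV.mid i) ≤ w (StarV.mid j)) :
    ∃ T : TDDecomp (subdivStar n),
      T.weightedDepth w = wtd (subdivStar n) w ∧
      (∀ k : Fin n, ∀ x, T.le (StarV.leaf k) x → x = StarV.leaf k) ∧
      (∀ i j : Fin n, i < j →
        (T.le (StarV.mid j) StarV.center ∧ StarV.mid j ≠ StarV.center) →
        (T.le (StarV.mid i) StarV.center ∧ StarV.mid i ≠ StarV.center)) :=
  stmt8_general n w hc
end

section
/- Let G be a finite simple graph in which every vertex has degree exactly 3, with n = |V(G)| = 2^m for some m ≥ 1, let k be an integer with 1 < k < n−1, and let G' (with weights, β, α and k' as specified) be the associated gadget graph. Let T be a treedepth decomposition of G' of weighted depth at most k' = 3n + k + α + 2, and for i = 1, 2, 3 let t_i be the unique ≤_T-minimal element of V(T_i). Then t_1, t_2, t_3 are pairwise ≤_T-incomparable. -/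
/-- Vertices of the gadget graph `G'` built from a cubic graph `G` on `2^m` vertices:
`copy v i` is `v_{i+1}` (the two copies `v_1, v_2` of `v`), `guard v i` is `v_{g(i+1)}`
(the three vertices `v_{g1}, v_{g2}, v_{g3}`), and `tree t i j` is the `j`-th vertex at
depth `i` of the complete binary tree `T_{t+1}` (depth `m` vertices are the `2^m` leaves). -/
inductive GadgetV (V : Type*) (m : ℕ) where
  | copy : V → Fin 2 → GadgetV V m
  | guard : V → Fin 3 → GadgetV V m
  | tree : Fin 3 → (i : Fin (m + 1)) → Fin (2 ^ i.val) → GadgetV V m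

/-- The base relation generating the edges of `G'` (for `e : V ≃ Fin (2^m)` the
identification of `V(G)` with the leaves of each tree):
copies of adjacent vertices are adjacent (`u_1v_1, u_2v_2, u_1v_2, u_2v_1`);
each `v_{gi}` is adjacent to `v_1` and `v_2`; consecutive levels of each complete
binary tree `T_t` are joined (child `j'` at depth `i+1` to parent `j'/2` at depth `i`);
and `v_1, v_{g1}` are joined to the leaf `v_{t_1}` of `T_1`, `v_2, v_{g2}` to the leaf
`v_{t_2}` of `T_2`, and `v_{g3}` to the leaf `v_{t_3}` of `T_3`. -/
def gadgetRel {V : Type*} {m : ℕ} (G : SimpleGraph V) (e : V ≃ Fin (2 ^ m)) :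
    GadgetV V m → GadgetV V m → Prop
  | .copy u _, .copy v _ => G.Adj u v
  | .copy u _, .guard v _ => u = v
  | .copy u i, .tree t d j => (t : ℕ) = (i : ℕ) ∧ (d : ℕ) = m ∧ (j : ℕ) = (e u : ℕ)
  | .guard u i, .tree t d j => (t : ℕ) = (i : ℕ) ∧ (d : ℕ) = m ∧ (j : ℕ) = (e u : ℕ)
  | .tree t d j, .tree t' d' j' => t = t' ∧ (d : ℕ) + 1 = (d' : ℕ) ∧ (j' : ℕ) / 2 = (j : ℕ)
  | _, _ => False

/-- The gadget graph `G'`. -/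
def gadget {V : Type*} {m : ℕ} (G : SimpleGraph V) (e : V ≃ Fin (2 ^ m)) :
    SimpleGraph (GadgetV V m) :=
  SimpleGraph.fromRel (gadgetRel G e)

/-- The weight function of `G'` (with parameter `β`): copies `v_1, v_2` have weight `2`,
the `v_{gi}` have weight `1`, and a tree vertex at depth `i` has weight `β + 3i`. -/
def gadgetW {V : Type*} {m : ℕ} (β : ℕ) : GadgetV V m → ℕ
  | .copy _ _ => 2
  | .guard _ _ => 1
  | .tree _ i _ => β + 3 * (i : ℕ)

namespace Stmt17Aux

variable {V : Type*} {m : ℕ}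

lemma tree_inj {t t' : Fin 3} {i i' : Fin (m+1)} {j : Fin (2^i.val)} {j' : Fin (2^i'.val)}
    (h : (GadgetV.tree t i j : GadgetV V m) = GadgetV.tree t' i' j') :
    t = t' ∧ (i:ℕ) = (i':ℕ) ∧ (j:ℕ) = (j':ℕ) := by
  injection h with h1 h2 h3
  subst h1; subst h2
  exact ⟨rfl, rfl, by rw [eq_of_heq h3]⟩

/-- Membership in the subtree of tree `t` rooted at node `(d, j)`. -/
def InSub (t : Fin 3) (d j : ℕ) (x : GadgetV V m) : Prop :=
  ∃ (i : Fin (m+1)) (j' : Fin (2 ^ i.val)),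
    x = GadgetV.tree t i j' ∧ d ≤ (i:ℕ) ∧ (j':ℕ) / 2 ^ ((i:ℕ) - d) = j

lemma root_mem (t : Fin 3) {d j : ℕ} (hd : d < m + 1) (hj : j < 2 ^ d) :
    InSub t d j (GadgetV.tree t ⟨d, hd⟩ ⟨j, hj⟩ : GadgetV V m) :=
  ⟨⟨d, hd⟩, ⟨j, hj⟩, rfl, le_refl d, by simp⟩

lemma child_mem {t : Fin 3} {d j b : ℕ} {x : GadgetV V m}
    (hb : b / 2 = j) (h : InSub t (d+1) b x) : InSub t d j x := by
  obtain ⟨i, j', rfl, hdi, hdiv⟩ := h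
  refine ⟨i, j', rfl, by omega, ?_⟩
  have h1 : (i:ℕ) - d = ((i:ℕ) - (d+1)) + 1 := by omega
  rw [h1, pow_succ, ← Nat.div_div_eq_div_mul, hdiv, hb]

lemma insub_cases {t : Fin 3} {d j : ℕ} {x : GadgetV V m}
    (hd : d < m + 1) (hj : j < 2 ^ d) (h : InSub t d j x) :
    x = GadgetV.tree t ⟨d, hd⟩ ⟨j, hj⟩ ∨ InSub t (d+1) (2*j) x ∨ InSub t (d+1) (2*j+1) x := by
  obtain ⟨i, j', rfl, hdi, hdiv⟩ := h
  rcases Nat.lt_or_ge d (i:ℕ) with hlt | hge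
  · right
    have hsplit : (j':ℕ) / 2 ^ ((i:ℕ) - (d+1)) / 2 = j := by
      rw [Nat.div_div_eq_div_mul, ← pow_succ]
      have he : (i:ℕ) - (d+1) + 1 = (i:ℕ) - d := by omega
      rw [he]; exact hdiv
    have hq : (j':ℕ) / 2 ^ ((i:ℕ) - (d+1)) = 2*j ∨ (j':ℕ) / 2 ^ ((i:ℕ) - (d+1)) = 2*j + 1 := by
      omega
    rcases hq with hq | hq
    · exact Or.inl ⟨i, j', rfl, by omega, hq⟩
    · exact Or.inr ⟨i, j', rfl, by omega, hq⟩
  · left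
    have hid : (i:ℕ) = d := by omega
    have hieq : i = ⟨d, hd⟩ := Fin.ext hid
    subst hieq
    have hj' : (j':ℕ) = j := by simpa using hdiv
    have : j' = ⟨j, hj⟩ := Fin.ext hj'
    rw [this]

lemma insub_disjoint {t : Fin 3} {d j : ℕ} {x : GadgetV V m}
    (h1 : InSub t (d+1) (2*j) x) (h2 : InSub t (d+1) (2*j+1) x) : False := by
  obtain ⟨i1, j1, rfl, hdi1, hdiv1⟩ := h1
  obtain ⟨i2, j2, heq, hdi2, hdiv2⟩ := h2
  obtain ⟨-, hi, hjj⟩ := tree_inj heq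
  have hsame : (j1:ℕ) / 2 ^ ((i1:ℕ) - (d+1)) = (j2:ℕ) / 2 ^ ((i2:ℕ) - (d+1)) := by
    rw [hjj]; rw [hi]
  omega

lemma adj_parent_child {G : SimpleGraph V} {e : V ≃ Fin (2^m)} {t : Fin 3}
    {i i' : Fin (m+1)} {j : Fin (2^i.val)} {j' : Fin (2^i'.val)}
    (hi : (i:ℕ) + 1 = (i':ℕ)) (hj : (j':ℕ) / 2 = (j:ℕ)) :
    (gadget G e).Adj (.tree t i j) (.tree t i' j') := by
  have hne : (GadgetV.tree t i j : GadgetV V m) ≠ .tree t i' j' := by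
    intro h
    have := (tree_inj h).2.1
    omega
  show (SimpleGraph.fromRel _).Adj _ _
  rw [SimpleGraph.fromRel_adj]
  exact ⟨hne, Or.inl ⟨rfl, hi, hj⟩⟩

variable {G : SimpleGraph V} {e : V ≃ Fin (2^m)}

/-- every subtree has a `T`-minimum. -/
lemma exists_subtree_min (T : TDDecomp (gadget G e)) (t : Fin 3) :
    ∀ h d j, d + h = m → j < 2 ^ d →
      ∃ x, InSub t d j x ∧ ∀ y, InSub t d j y → T.le x y := by
  intro h
  induction h with
  | zero =>
    intro d j hdm hj
    have hd : d < m + 1 := by omega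
    refine ⟨GadgetV.tree t ⟨d, hd⟩ ⟨j, hj⟩, root_mem t hd hj, ?_⟩
    rintro y ⟨i, j', rfl, hdi, hdiv⟩
    have hid : (i:ℕ) = d := by omega
    have hieq : i = ⟨d, hd⟩ := Fin.ext hid
    subst hieq
    have hj' : (j':ℕ) = j := by simpa using hdiv
    have : j' = ⟨j, hj⟩ := Fin.ext hj'
    rw [this]
    exact T.le_refl _
  | succ h ih =>
    intro d j hdm hj
    have hd : d < m + 1 := by omega
    have hd1 : d + 1 < m + 1 := by omega
    have hjL : 2*j < 2^(d+1) := by rw [pow_succ]; omega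
    have hjR : 2*j+1 < 2^(d+1) := by rw [pow_succ]; omega
    obtain ⟨xL, hxLmem, hxLmin⟩ := ih (d+1) (2*j) (by omega) hjL
    obtain ⟨xR, hxRmem, hxRmin⟩ := ih (d+1) (2*j+1) (by omega) hjR
    set r : GadgetV V m := GadgetV.tree t ⟨d, hd⟩ ⟨j, hj⟩ with hr
    set cL : GadgetV V m := GadgetV.tree t ⟨d+1, hd1⟩ ⟨2*j, hjL⟩ with hcL
    set cR : GadgetV V m := GadgetV.tree t ⟨d+1, hd1⟩ ⟨2*j+1, hjR⟩ with hcR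
    have hadjL : (gadget G e).Adj r cL :=
      adj_parent_child rfl (show 2*j/2 = j by omega)
    have hadjR : (gadget G e).Adj r cR :=
      adj_parent_child rfl (show (2*j+1)/2 = j by omega)
    have hxLcL : T.le xL cL := hxLmin cL (root_mem t hd1 hjL)
    have hxRcR : T.le xR cR := hxRmin cR (root_mem t hd1 hjR)
    have hrxL : T.le r xL ∨ T.le xL r := by
      rcases T.adj_comparable r cL hadjL with hc | hc
      · exact T.down_linear cL r xL hc hxLcL
      · exact Or.inr (T.le_trans _ _ _ hxLcL hc)
    have hrxR : T.le r xR ∨ T.le xR r := by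
      rcases T.adj_comparable r cR hadjR with hc | hc
      · exact T.down_linear cR r xR hc hxRcR
      · exact Or.inr (T.le_trans _ _ _ hxRcR hc)
    have key : ∀ x, InSub t d j x → T.le x r → T.le x xL → T.le x xR →
        ∃ x, InSub t d j x ∧ ∀ y, InSub t d j y → T.le x y := by
      intro x hx h1 h2 h3
      refine ⟨x, hx, fun y hy => ?_⟩
      rcases insub_cases hd hj hy with rfl | hm' | hm'
      · exact h1
      · exact T.le_trans _ _ _ h2 (hxLmin y hm')
      · exact T.le_trans _ _ _ h3 (hxRmin y hm')
    have hrmem : InSub t d j r := root_mem t hd hj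
    have hxLmem' : InSub t d j xL := child_mem (by omega) hxLmem
    have hxRmem' : InSub t d j xR := child_mem (by omega) hxRmem
    rcases hrxL with hL | hL <;> rcases hrxR with hR | hR
    · exact key r hrmem (T.le_refl r) hL hR
    · exact key xR hxRmem' hR (T.le_trans _ _ _ hR hL) (T.le_refl xR)
    · exact key xL hxLmem' hL (T.le_refl xL) (T.le_trans _ _ _ hL hR)
    · rcases T.down_linear r xL xR hL hR with hc | hc
      · exact key xL hxLmem' hL (T.le_refl xL) hc
      · exact key xR hxRmem' hR hc (T.le_refl xR)

lemma icc_split {f : ℕ → ℕ} {d M : ℕ} (h : d ≤ M) :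
    ∑ i ∈ Finset.Icc d M, f i = f d + ∑ i ∈ Finset.Icc (d+1) M, f i := by
  rw [Finset.Icc_add_one_left_eq_Ioc, ← Finset.sum_insert (by simp), Finset.Ioc_insert_left h]

/-- every subtree rooted at depth `d` contains a chain of weight at least
`∑_{i=d}^m (β+3i)`. -/
lemma exists_subtree_chain (T : TDDecomp (gadget G e)) (β : ℕ) (t : Fin 3) :
    ∀ h d j, d + h = m → j < 2 ^ d →
      ∃ C : Finset (GadgetV V m), T.IsChain C ∧ (∀ x ∈ C, InSub t d j x) ∧
        ∑ i ∈ Finset.Icc d m, (β + 3*i) ≤ C.sum (gadgetW β) := by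
  classical
  intro h
  induction h with
  | zero =>
    intro d j hdm hj
    have hd : d < m + 1 := by omega
    refine ⟨{GadgetV.tree t ⟨d, hd⟩ ⟨j, hj⟩}, ?_, ?_, ?_⟩
    · intro x hx y hy
      simp only [Finset.mem_singleton] at hx hy
      subst hx; subst hy; exact Or.inl (T.le_refl _)
    · intro x hx
      simp only [Finset.mem_singleton] at hx
      subst hx; exact root_mem t hd hj
    · have : d = m := by omega
      subst this
      simp [gadgetW]
  | succ h ih =>
    intro d j hdm hj
    have hd : d < m + 1 := by omega
    have hjL : 2*j < 2^(d+1) := by rw [pow_succ]; omega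
    have hjR : 2*j+1 < 2^(d+1) := by rw [pow_succ]; omega
    obtain ⟨x, hxmem, hxmin⟩ := exists_subtree_min T t (h+1) d j hdm hj
    -- pick the child subtree not containing x
    have hpick : ∃ b, b / 2 = j ∧ b < 2^(d+1) ∧ ¬ InSub t (d+1) b x := by
      by_cases hxL : InSub t (d+1) (2*j) x
      · exact ⟨2*j+1, by omega, hjR, fun hxR => insub_disjoint hxL hxR⟩
      · exact ⟨2*j, by omega, hjL, hxL⟩
    obtain ⟨b, hb2, hblt, hbx⟩ := hpick
    obtain ⟨C', hC'chain, hC'mem, hC'sum⟩ := ih (d+1) b (by omega) hblt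
    have hxC' : x ∉ C' := fun hx => hbx (hC'mem x hx)
    refine ⟨insert x C', ?_, ?_, ?_⟩
    · intro p hp q hq
      rcases Finset.mem_insert.mp hp with hp' | hp' <;>
        rcases Finset.mem_insert.mp hq with hq' | hq'
      · subst hp'; subst hq'; exact Or.inl (T.le_refl _)
      · subst hp'; exact Or.inl (hxmin q (child_mem hb2 (hC'mem q hq')))
      · subst hq'; exact Or.inr (hxmin p (child_mem hb2 (hC'mem p hp')))
      · exact hC'chain p hp' q hq'
    · intro y hy
      rcases Finset.mem_insert.mp hy with rfl | hy
      · exact hxmem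
      · exact child_mem hb2 (hC'mem y hy)
    · obtain ⟨i0, j0, rfl, hdi0, -⟩ := hxmem
      have hw : β + 3*d ≤ gadgetW β (GadgetV.tree t i0 j0 : GadgetV V m) := by
        show β + 3*d ≤ β + 3 * (i0:ℕ)
        omega
      have hsplit : ∑ i ∈ Finset.Icc d m, (β + 3*i)
          = (β + 3*d) + ∑ i ∈ Finset.Icc (d+1) m, (β + 3*i) :=
        icc_split (by omega)
      rw [Finset.sum_insert hxC', hsplit]
      exact add_le_add hw hC'sum

def gadgetVEquiv : GadgetV V m ≃ (V × Fin 2 ⊕ V × Fin 3 ⊕ Fin 3 × Σ i : Fin (m+1), Fin (2^(i:ℕ))) where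
  toFun x := match x with
    | .copy v i => Sum.inl (v, i)
    | .guard v i => Sum.inr (Sum.inl (v, i))
    | .tree t i j => Sum.inr (Sum.inr (t, ⟨i, j⟩))
  invFun x := match x with
    | Sum.inl (v, i) => .copy v i
    | Sum.inr (Sum.inl (v, i)) => .guard v i
    | Sum.inr (Sum.inr (t, ⟨i, j⟩)) => .tree t i j
  left_inv x := by cases x <;> rfl
  right_inv x := by rcases x with ⟨v, i⟩ | (⟨v, i⟩ | ⟨t, ⟨i, j⟩⟩) <;> rfl

noncomputable instance [Fintype V] : Fintype (GadgetV V m) :=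
  Fintype.ofEquiv _ (gadgetVEquiv (V := V) (m := m)).symm

lemma no_le_aux [Fintype V] (T : TDDecomp (gadget G e)) (β α k' : ℕ)
    (hα : α = ∑ i ∈ Finset.range (m + 1), (β + 3 * i))
    (hβα : k' + 1 ≤ β + α)
    (hT : T.weightedDepth (gadgetW β) ≤ k')
    (a b : Fin 3) (hab : a ≠ b) (ta tb : GadgetV V m)
    (hta : ∃ (i : Fin (m + 1)) (j : Fin (2 ^ i.val)), ta = GadgetV.tree a i j)
    (htb : ∀ y, (∃ (i : Fin (m + 1)) (j : Fin (2 ^ i.val)), y = GadgetV.tree b i j) → T.le tb y)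
    (hle : T.le ta tb) : False := by
  classical
  obtain ⟨C, hCchain, hCmem, hCsum⟩ :=
    exists_subtree_chain T β b m 0 0 (by omega) (by norm_num)
  have htaC : ∀ c ∈ C, T.le ta c := by
    intro c hc
    obtain ⟨i, j', rfl, -, -⟩ := hCmem c hc
    exact T.le_trans _ _ _ hle (htb _ ⟨i, j', rfl⟩)
  obtain ⟨ia, ja, rfl⟩ := hta
  have htaC' : (GadgetV.tree a ia ja : GadgetV V m) ∉ C := by
    intro hx
    obtain ⟨i, j', heq, -, -⟩ := hCmem _ hx
    exact hab (tree_inj heq).1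
  set D : Finset (GadgetV V m) := insert (GadgetV.tree a ia ja) C with hD
  have hDchain : T.IsChain D := by
    intro x hx y hy
    rcases Finset.mem_insert.mp hx with rfl | hx <;>
      rcases Finset.mem_insert.mp hy with rfl | hy
    · exact Or.inl (T.le_refl _)
    · exact Or.inl (htaC y hy)
    · exact Or.inr (htaC x hx)
    · exact hCchain x hx y hy
  have hsum : β + α ≤ D.sum (gadgetW β) := by
    have h1 : β ≤ gadgetW β (GadgetV.tree a ia ja : GadgetV V m) := by
      show β ≤ β + 3 * (ia:ℕ); omega
    have h2 : α = ∑ i ∈ Finset.Icc 0 m, (β + 3 * i) := by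
      rw [hα, Finset.range_eq_Ico, Finset.Ico_add_one_right_eq_Icc]
    rw [hD, Finset.sum_insert htaC', h2]
    exact add_le_add h1 hCsum
  have hmem : D.sum (gadgetW β) ∈ {s | ∃ C : Finset (GadgetV V m), T.IsChain C ∧ s = C.sum (gadgetW β)} :=
    ⟨D, hDchain, rfl⟩
  have hbdd : BddAbove {s | ∃ C : Finset (GadgetV V m), T.IsChain C ∧ s = C.sum (gadgetW β)} := by
    refine ⟨∑ x : GadgetV V m, gadgetW β x, ?_⟩
    rintro s ⟨C, -, rfl⟩
    exact Finset.sum_le_sum_of_subset (Finset.subset_univ C)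
  have h1 : D.sum (gadgetW β) ≤ T.weightedDepth (gadgetW β) := le_csSup hbdd hmem
  have h2 : β + α ≤ k' := le_trans hsum (le_trans h1 hT)
  omega

end Stmt17Aux

/-- Let `T` be a treedepth decomposition of the gadget graph `G'` of
weighted depth at most `k'`, and for `i = 1, 2, 3` let `t_i` be the unique
`≤_T`-minimal element of `V(T_i)`. Then `t_1, t_2, t_3` are pairwise
`≤_T`-incomparable. -/
theorem stmt17 {V : Type*} [Fintype V] (G : SimpleGraph V) (m : ℕ) (hm : 1 ≤ m)
    (hcard : Fintype.card V = 2 ^ m) (e : V ≃ Fin (2 ^ m))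
    (hdeg : ∀ v : V, (G.neighborSet v).ncard = 3)
    (k : ℕ) (hk1 : 1 < k) (hk2 : k < Fintype.card V - 1)
    (β α k' : ℕ)
    (hβ : β = 3 * Fintype.card V + k + 3)
    (hα : α = ∑ i ∈ Finset.range (m + 1), (β + 3 * i))
    (hk' : k' = 3 * Fintype.card V + k + α + 2)
    (T : TDDecomp (gadget G e))
    (hT : T.weightedDepth (gadgetW β) ≤ k')
    (t₁ t₂ t₃ : GadgetV V m)
    (ht₁ : (∃ (i : Fin (m + 1)) (j : Fin (2 ^ i.val)), t₁ = GadgetV.tree 0 i j) ∧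
      ∀ y, (∃ (i : Fin (m + 1)) (j : Fin (2 ^ i.val)), y = GadgetV.tree 0 i j) → T.le t₁ y)
    (ht₂ : (∃ (i : Fin (m + 1)) (j : Fin (2 ^ i.val)), t₂ = GadgetV.tree 1 i j) ∧
      ∀ y, (∃ (i : Fin (m + 1)) (j : Fin (2 ^ i.val)), y = GadgetV.tree 1 i j) → T.le t₂ y)
    (ht₃ : (∃ (i : Fin (m + 1)) (j : Fin (2 ^ i.val)), t₃ = GadgetV.tree 2 i j) ∧
      ∀ y, (∃ (i : Fin (m + 1)) (j : Fin (2 ^ i.val)), y = GadgetV.tree 2 i j) → T.le t₃ y) :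
    (¬ T.le t₁ t₂ ∧ ¬ T.le t₂ t₁) ∧ (¬ T.le t₁ t₃ ∧ ¬ T.le t₃ t₁) ∧
      (¬ T.le t₂ t₃ ∧ ¬ T.le t₃ t₂) := by
  have hβα : k' + 1 ≤ β + α := by omega
  refine ⟨⟨fun hle => ?_, fun hle => ?_⟩, ⟨fun hle => ?_, fun hle => ?_⟩,
    ⟨fun hle => ?_, fun hle => ?_⟩⟩
  · exact Stmt17Aux.no_le_aux T β α k' hα hβα hT 0 1 (by decide) t₁ t₂ ht₁.1 ht₂.2 hle
  · exact Stmt17Aux.no_le_aux T β α k' hα hβα hT 1 0 (by decide) t₂ t₁ ht₂.1 ht₁.2 hle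
  · exact Stmt17Aux.no_le_aux T β α k' hα hβα hT 0 2 (by decide) t₁ t₃ ht₁.1 ht₃.2 hle
  · exact Stmt17Aux.no_le_aux T β α k' hα hβα hT 2 0 (by decide) t₃ t₁ ht₃.1 ht₁.2 hle
  · exact Stmt17Aux.no_le_aux T β α k' hα hβα hT 1 2 (by decide) t₂ t₃ ht₂.1 ht₃.2 hle
  · exact Stmt17Aux.no_le_aux T β α k' hα hβα hT 2 1 (by decide) t₃ t₂ ht₃.1 ht₂.2 hle
end
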